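/- arXiv:math/0511278 — 7 statements merged into one kernel-verified Lean document; each statement's English description precedes it below -/
import Mathlib

section
/- For every N×N complex matrix T and every integer k ≥ 1, the rank-k numerical range Λ_k(T) is a compact subset of the complex plane. -/
open Matrix Complex

/-! Taking traces in `P T P = λ P` and using `trace P = rank P = k` for an idempotent `P` gives
`λ = trace (P T P) / k`, so `Λ_k(T)` is the image under a continuous map of a closed set of
orthogonal projections. That set is bounded: a Hermitian idempotent satisfies
`P i i = ∑ j, ‖P i j‖ ^ 2`, which forces `P i i ≤ 1` and then `‖P i j‖ ≤ 1`. -/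

/-- The rank-k numerical range of a square complex matrix `T`:
all `λ ∈ ℂ` such that `P T P = λ P` for some orthogonal projection `P` of rank `k`. -/
def rankKRange {n : Type*} [Fintype n] [DecidableEq n]
    (k : ℕ) (T : Matrix n n ℂ) : Set ℂ :=
  {lam : ℂ | ∃ P : Matrix n n ℂ,
    P.IsHermitian ∧ P * P = P ∧ P.rank = k ∧ P * T * P = lam • P}

namespace Matrix

variable {n : Type*} [Fintype n]

theorem trace_eq_rank_of_isIdempotentElem [DecidableEq n] {K : Type*} [Field K] {P : Matrix n n K}
    (hP : IsIdempotentElem P) : P.trace = P.rank := by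
  have hproj : LinearMap.IsProj (LinearMap.range (toLin' P)) (toLin' P) :=
    LinearMap.IsIdempotentElem.isProj_range _ (hP.map toLinAlgEquiv')
  rw [← trace_toLin'_eq, hproj.trace]
  rfl

theorem diag_eq_sum_sq_norm_of_isHermitian_of_isIdempotentElem {P : Matrix n n ℂ}
    (hH : P.IsHermitian) (hP : IsIdempotentElem P) (i : n) : P i i = ∑ j, (‖P i j‖ ^ 2 : ℝ) := by
  conv_lhs => rw [← hP.eq, mul_apply]
  push_cast
  refine Finset.sum_congr rfl fun j _ => ?_
  rw [← hH.apply j i]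
  exact mul_conj' _

theorem norm_apply_le_one_of_isHermitian_of_isIdempotentElem {P : Matrix n n ℂ}
    (hH : P.IsHermitian) (hP : IsIdempotentElem P) (i j : n) : ‖P i j‖ ≤ 1 := by
  have hdiag := diag_eq_sum_sq_norm_of_isHermitian_of_isIdempotentElem hH hP i
  set r := ∑ j, ‖P i j‖ ^ 2
  have hle : ∀ j, ‖P i j‖ ^ 2 ≤ r := fun j =>
    Finset.single_le_sum (fun j _ => sq_nonneg ‖P i j‖) (Finset.mem_univ j)
  have hr : r ≤ 1 := by
    have := hle i
    rw [hdiag, norm_real, Real.norm_of_nonneg (by positivity)] at this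
    nlinarith
  nlinarith [hle j, norm_nonneg (P i j)]

theorem isCompact_setOf_isHermitian_isIdempotentElem :
    IsCompact {P : Matrix n n ℂ | P.IsHermitian ∧ IsIdempotentElem P} := by
  have hbox : IsCompact (Set.univ.pi fun _ : n => Set.univ.pi fun _ : n =>
      Metric.closedBall (0 : ℂ) 1) :=
    isCompact_univ_pi fun _ => isCompact_univ_pi fun _ => isCompact_closedBall _ _
  refine hbox.of_isClosed_subset ?_ ?_
  · exact (isClosed_eq continuous_id.matrix_conjTranspose continuous_id).inter
      (isClosed_eq (continuous_id.matrix_mul continuous_id) continuous_id)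
  · rintro P ⟨hH, hP⟩ i - j -
    simpa using norm_apply_le_one_of_isHermitian_of_isIdempotentElem hH hP i j

end Matrix

theorem rankKRange_eq_image {n : Type*} [Fintype n] [DecidableEq n] {k : ℕ} (hk : k ≠ 0) (T : Matrix n n ℂ) :
    rankKRange k T = (fun P : Matrix n n ℂ => (P * T * P).trace / k) ''
      {P : Matrix n n ℂ | (P.IsHermitian ∧ IsIdempotentElem P) ∧
        P.trace = k ∧ P * T * P = ((P * T * P).trace / k) • P} := by
  have hkC : (k : ℂ) ≠ 0 := Nat.cast_ne_zero.mpr hk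
  ext lam
  constructor
  · rintro ⟨P, hH, hP, hrank, hPTP⟩
    have htrace : P.trace = k := by rw [trace_eq_rank_of_isIdempotentElem hP, hrank]
    have hlam : (P * T * P).trace / k = lam := by
      rw [hPTP, trace_smul, htrace, smul_eq_mul, mul_div_cancel_right₀ _ hkC]
    exact ⟨P, ⟨⟨hH, hP⟩, htrace, hlam ▸ hPTP⟩, hlam⟩
  · rintro ⟨P, ⟨⟨hH, hP⟩, htrace, hPTP⟩, rfl⟩
    have hrank : P.rank = k := by
      exact_mod_cast (trace_eq_rank_of_isIdempotentElem hP).symm.trans htrace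
    exact ⟨P, hH, hP, hrank, hPTP⟩

/-- Λ_k(T) is compact. -/
theorem rankKRange_isCompact (N k : ℕ) (hk : 1 ≤ k) (T : Matrix (Fin N) (Fin N) ℂ) :
    IsCompact (rankKRange k T) := by
  have hPTP : Continuous fun P : Matrix (Fin N) (Fin N) ℂ => P * T * P :=
    (continuous_id.matrix_mul continuous_const).matrix_mul continuous_id
  have hlam : Continuous fun P : Matrix (Fin N) (Fin N) ℂ => (P * T * P).trace / k :=
    hPTP.matrix_trace.div_const _
  rw [rankKRange_eq_image (by omega)]
  refine (isCompact_setOf_isHermitian_isIdempotentElem.inter_right ?_).image hlam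
  exact (isClosed_eq continuous_id.matrix_trace continuous_const).inter
    (isClosed_eq hPTP (hlam.smul continuous_id))
end

section
/- Let T be an N×N complex matrix and let k be an integer with 2k > N. Then the rank-k numerical range Λ_k(T) contains at most one point: if λ₀ and λ₁ both belong to Λ_k(T), then λ₀ = λ₁. -/
open Matrix Complex

lemma aux_fix {N : ℕ} (P : Matrix (Fin N) (Fin N) ℂ) (hP : P * P = P)
    (x : Fin N → ℂ) (hx : x ∈ LinearMap.range P.mulVecLin) : P *ᵥ x = x := by
  obtain ⟨y, rfl⟩ := hx
  simp only [mulVecLin_apply, mulVec_mulVec, hP]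

lemma aux_eval {N : ℕ} (P T : Matrix (Fin N) (Fin N) ℂ) (lam : ℂ)
    (hH : P.IsHermitian) (hE : P * T * P = lam • P)
    (x : Fin N → ℂ) (hfix : P *ᵥ x = x) :
    star x ⬝ᵥ (T *ᵥ x) = lam * (star x ⬝ᵥ x) := by
  have hvm : star x ᵥ* P = star x := by
    have := congrArg star hfix
    rwa [star_mulVec, hH.eq] at this
  have h1 : star x ⬝ᵥ ((P * T * P) *ᵥ x) = star x ⬝ᵥ (T *ᵥ x) := by
    rw [← mulVec_mulVec, ← mulVec_mulVec, hfix, dotProduct_mulVec, hvm]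
  have h2 : star x ⬝ᵥ ((lam • P) *ᵥ x) = lam * (star x ⬝ᵥ x) := by
    rw [smul_mulVec, hfix, dotProduct_smul, smul_eq_mul]
  rw [← h1, hE, h2]

open scoped ComplexOrder in
lemma aux_dot {n : Type*} [Fintype n] {v : n → ℂ} (h : star v ⬝ᵥ v = 0) : v = 0 :=
  dotProduct_star_self_eq_zero.mp h

/-- if 2k > N then Λ_k(T) contains at most one point. -/
theorem rankKRange_subsingleton_of_two_k_gt (N k : ℕ) (hk : 2 * k > N)
    (T : Matrix (Fin N) (Fin N) ℂ) (lam₀ lam₁ : ℂ)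
    (h₀ : lam₀ ∈ rankKRange k T) (h₁ : lam₁ ∈ rankKRange k T) :
    lam₀ = lam₁ := by
  obtain ⟨P₀, hH₀, hP₀, hr₀, hE₀⟩ := h₀
  obtain ⟨P₁, hH₁, hP₁, hr₁, hE₁⟩ := h₁
  set R₀ := LinearMap.range P₀.mulVecLin with hR₀
  set R₁ := LinearMap.range P₁.mulVecLin with hR₁
  have hsum := Submodule.finrank_sup_add_finrank_inf_eq R₀ R₁
  have hsup : Module.finrank ℂ ↥(R₀ ⊔ R₁) ≤ N := by
    refine le_trans (Submodule.finrank_le _) ?_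
    simp [Module.finrank_pi]
  have hfr₀ : Module.finrank ℂ ↥R₀ = k := hr₀
  have hfr₁ : Module.finrank ℂ ↥R₁ = k := hr₁
  have hpos : 0 < Module.finrank ℂ ↥(R₀ ⊓ R₁) := by omega
  have hne : (R₀ ⊓ R₁) ≠ ⊥ := by
    intro h
    rw [h] at hpos
    simp at hpos
  obtain ⟨x, hxmem, hxne⟩ := Submodule.ne_bot_iff _ |>.mp hne
  have hx₀ : P₀ *ᵥ x = x := aux_fix P₀ hP₀ x hxmem.1
  have hx₁ : P₁ *ᵥ x = x := aux_fix P₁ hP₁ x hxmem.2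
  have e₀ := aux_eval P₀ T lam₀ hH₀ hE₀ x hx₀
  have e₁ := aux_eval P₁ T lam₁ hH₁ hE₁ x hx₁
  have hc : star x ⬝ᵥ x ≠ 0 := by
    intro h
    exact hxne (aux_dot h)
  exact mul_right_cancel₀ hc (e₀.symm.trans e₁)
end

section
/- Let T be an N×N complex matrix and let k be an integer with 2k > N. If λ₀ ∈ Λ_k(T), then λ₀ is an eigenvalue of T of geometric multiplicity at least 2k − N; that is, the dimension of the kernel of T − λ₀I is at least 2k − N (equivalently, rank(T − λ₀I) ≤ 2N − 2k). -/
open Matrix Complex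

/-- if 2k > N and λ₀ ∈ Λ_k(T), then λ₀ is an eigenvalue of T of
geometric multiplicity at least 2k − N. -/
theorem rankKRange_eigenvalue_multiplicity (N k : ℕ) (hk : 2 * k > N)
    (T : Matrix (Fin N) (Fin N) ℂ) (lam₀ : ℂ) (h : lam₀ ∈ rankKRange k T) :
    2 * k - N ≤
      Module.finrank ℂ
        (LinearMap.ker (Matrix.mulVecLin (T - lam₀ • (1 : Matrix (Fin N) (Fin N) ℂ)))) := by
  obtain ⟨P, hPh, hP2, hPrank, hPTP⟩ := h
  set S : Matrix (Fin N) (Fin N) ℂ := T - lam₀ • (1 : Matrix (Fin N) (Fin N) ℂ) with hS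
  have hPSP : P * S * P = 0 := by
    have h1 : P * (lam₀ • (1 : Matrix (Fin N) (Fin N) ℂ)) * P = lam₀ • P := by
      simp [Matrix.mul_smul, Matrix.smul_mul, hP2]
    rw [hS, Matrix.mul_sub, Matrix.sub_mul, hPTP, h1, sub_self]
  set Sl := S.mulVecLin with hSl
  set Pl := P.mulVecLin with hPl
  have h0 : ∀ y, Pl (Sl (Pl y)) = 0 := by
    intro y
    have h1 : Pl (Sl (Pl y)) = (P * S * P).mulVecLin y := by
      rw [hPl, hSl, Matrix.mulVecLin_mul, Matrix.mulVecLin_mul]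
      rfl
    rw [h1, hPSP]
    simp
  have hVk : Module.finrank ℂ (LinearMap.range Pl) = k := hPrank
  set g := Sl.domRestrict (LinearMap.range Pl) with hg
  have hrange : LinearMap.range g ≤ LinearMap.ker Pl := by
    rintro _ ⟨⟨x, y, rfl⟩, rfl⟩
    exact h0 y
  have hkerPl : Module.finrank ℂ (LinearMap.range Pl)
      + Module.finrank ℂ (LinearMap.ker Pl) = N := by
    have := LinearMap.finrank_range_add_finrank_ker Pl
    rwa [Module.finrank_fin_fun] at this
  have hrg : Module.finrank ℂ (LinearMap.range g)
      ≤ Module.finrank ℂ (LinearMap.ker Pl) := Submodule.finrank_mono hrange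
  have hrn : Module.finrank ℂ (LinearMap.range g) + Module.finrank ℂ (LinearMap.ker g)
      = k := by
    rw [← hVk]; exact LinearMap.finrank_range_add_finrank_ker g
  have hmap : Submodule.map (LinearMap.range Pl).subtype (LinearMap.ker g)
      ≤ LinearMap.ker Sl := by
    rintro _ ⟨x, hx, rfl⟩
    exact hx
  have hfin := Submodule.finrank_mono hmap
  rw [Submodule.finrank_map_subtype_eq] at hfin
  omega
end

section
/- Let T be an N×N normal complex matrix and let k be an integer with 2k > N. Then λ₀ ∈ Λ_k(T) if and only if there exist a (2N−2k)×(2N−2k) complex matrix T₀ and an N×N unitary matrix V such that V*TV is the direct sum λ₀·I_{2k−N} ⊕ T₀ (block diagonal with blocks λ₀·I_{2k−N} and T₀) and λ₀ belongs to Λ_{N−k}(T₀). -/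
open Matrix Complex

/-!
If `P T P = λ P` with `rank P = k`, then `A = T - λ` satisfies `P A P = 0`, so `A` maps
`range P` into `ker P`; since `dim range P = k > N - k = dim ker P`, the kernel of `A` meets
`range P` in dimension at least `2k - N`. An orthonormal family `W` of `2k - N` such vectors
consists of eigenvectors of `T` for `λ`, and by normality of `Tᴴ` for `conj λ`, so completing `W`
to a unitary `V = [W V₂]` splits `Vᴴ T V` as `λ I ⊕ T₀`. In these coordinates `P` becomes
`I ⊕ Q`, where `Q` is a projection of rank `N - k` with `Q T₀ Q = λ Q`. Conversely, `I ⊕ Q` is a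
projection of rank `k` compressing `λ I ⊕ T₀` to `λ`.
-/

open Module
open scoped ComplexOrder

theorem Matrix.rank_eq_trace_of_isIdempotentElem {K n : Type*} [Field K] [Fintype n]
    [DecidableEq n] {P : Matrix n n K} (hP : IsIdempotentElem P) : (P.rank : K) = P.trace := by
  have h : IsIdempotentElem (toLin' P) := hP.map (toLinAlgEquiv' (R := K) (n := n))
  rw [← trace_toLin'_eq, (LinearMap.IsIdempotentElem.isProj_range _ h).trace, rank, toLin'_apply']

theorem Matrix.rank_fromBlocks_one_of_isIdempotentElem {K m n : Type*} [Field K] [CharZero K]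
    [Fintype m] [DecidableEq m] [Fintype n] [DecidableEq n] {Q : Matrix n n K}
    (hQ : IsIdempotentElem Q) :
    (fromBlocks (1 : Matrix m m K) 0 0 Q).rank = Fintype.card m + Q.rank := by
  have hB : IsIdempotentElem (fromBlocks (1 : Matrix m m K) 0 0 Q) := by
    simp [IsIdempotentElem, fromBlocks_multiply, hQ.eq]
  apply Nat.cast_injective (R := K)
  rw [rank_eq_trace_of_isIdempotentElem hB, Nat.cast_add, rank_eq_trace_of_isIdempotentElem hQ]
  simp [trace, Fintype.sum_sum_type]

theorem Matrix.card_le_card_of_mul_eq_one {K m n : Type*} [Field K] [Fintype m] [DecidableEq m]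
    [Fintype n] {A : Matrix m n K} {B : Matrix n m K} (h : A * B = 1) :
    Fintype.card m ≤ Fintype.card n := by
  calc Fintype.card m = (A * B).rank := by rw [h, rank_one]
    _ ≤ A.rank := rank_mul_le_left A B
    _ ≤ Fintype.card n := rank_le_card_width A

theorem Matrix.conjTranspose_mul_eq_zero_of_mul_eq_zero {R n p : Type*} [Fintype n]
    [PartialOrder R] [NonUnitalRing R] [StarRing R] [StarOrderedRing R] [NoZeroDivisors R]
    {A : Matrix n n R} (hA : A * Aᴴ = Aᴴ * A) {W : Matrix n p R} (hW : A * W = 0) :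
    Aᴴ * W = 0 := by
  rw [← conjTranspose_mul_self_mul_eq_zero, conjTranspose_conjTranspose, hA,
    Matrix.mul_assoc, hW, Matrix.mul_zero]

theorem Matrix.conjTranspose_mul_eq_smul_of_mul_eq_smul {R n p : Type*} [Fintype n]
    [DecidableEq n] [PartialOrder R] [CommRing R] [StarRing R] [StarOrderedRing R]
    [NoZeroDivisors R] {T : Matrix n n R} (hT : T * Tᴴ = Tᴴ * T) {W : Matrix n p R} {c : R}
    (hTW : T * W = c • W) :
    Wᴴ * T = c • Wᴴ := by
  have hT' : Commute T Tᴴ := hT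
  have hA : Commute (T - c • 1) (T - c • 1)ᴴ := by
    rw [conjTranspose_sub, conjTranspose_smul, conjTranspose_one]
    exact (hT'.sub_right ((Commute.one_right T).smul_right _)).sub_left
      ((Commute.one_left _).smul_left c)
  have hAW : (T - c • 1) * W = 0 := by
    rw [Matrix.sub_mul, Matrix.smul_mul, Matrix.one_mul, hTW, sub_self]
  have := congrArg conjTranspose (conjTranspose_mul_eq_zero_of_mul_eq_zero hA.eq hAW)
  rwa [conjTranspose_mul, conjTranspose_conjTranspose, conjTranspose_zero, Matrix.mul_sub,
    Matrix.mul_smul, Matrix.mul_one, sub_eq_zero] at this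

theorem Matrix.conjTranspose_fromCols_mul_mul_fromCols {R n m m' : Type*} [CommRing R]
    [StarRing R] [Fintype n] [Fintype m] [Fintype m'] [DecidableEq m] [DecidableEq m']
    {M : Matrix n n R} {W : Matrix n m R} {V₂ : Matrix n m' R}
    (hV : (fromCols W V₂)ᴴ * fromCols W V₂ = 1) {c : R}
    (hMW : M * W = c • W) (hWM : Wᴴ * M = c • Wᴴ) :
    (fromCols W V₂)ᴴ * M * fromCols W V₂ = fromBlocks (c • 1) 0 0 (V₂ᴴ * M * V₂) := by
  rw [conjTranspose_fromCols_eq_fromRows_conjTranspose, fromRows_mul_fromCols,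
    ← fromBlocks_one, fromBlocks_inj] at hV
  obtain ⟨hWW, hWV₂, hV₂W, -⟩ := hV
  rw [conjTranspose_fromCols_eq_fromRows_conjTranspose, fromRows_mul, fromRows_mul_fromCols,
    hWM, Matrix.smul_mul, Matrix.smul_mul, hWW, hWV₂, smul_zero, Matrix.mul_assoc, hMW,
    Matrix.mul_smul, hV₂W, smul_zero]

theorem LinearMap.two_mul_finrank_range_le {K V : Type*} [DivisionRing K] [AddCommGroup V]
    [Module K V] [FiniteDimensional K V] {p a : V →ₗ[K] V} (h : ∀ x, p (a (p x)) = 0) :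
    2 * finrank K (range p) ≤ finrank K V + finrank K ↥(range p ⊓ ker a) := by
  set g := a.domRestrict (range p)
  have hker : finrank K (ker g) = finrank K ↥(range p ⊓ ker a) := by
    rw [← Submodule.finrank_map_subtype_eq, ker_domRestrict, Submodule.map_comap_subtype]
  have hrange : range g ≤ ker p := by
    rintro _ ⟨⟨_, y, rfl⟩, rfl⟩
    exact h y
  have := Submodule.finrank_mono hrange
  have hg := g.finrank_range_add_finrank_ker
  have hp := p.finrank_range_add_finrank_ker
  omega

theorem exists_unitary_inl_cols_mem {𝕜 n m m' : Type*} [RCLike 𝕜] [Fintype n] [DecidableEq n]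
    [Fintype m] [DecidableEq m] [Fintype m'] [DecidableEq m']
    (K : Submodule 𝕜 (EuclideanSpace 𝕜 n)) (hm : Fintype.card m ≤ finrank 𝕜 K)
    (hcard : Fintype.card m + Fintype.card m' = Fintype.card n) :
    ∃ V : Matrix n (m ⊕ m') 𝕜, Vᴴ * V = 1 ∧ V * Vᴴ = 1 ∧
      ∀ j, WithLp.toLp 2 (fun i => V i (Sum.inl j)) ∈ K := by
  obtain ⟨e⟩ : Nonempty (m ↪ Fin (finrank 𝕜 K)) :=
    Function.Embedding.nonempty_of_card_le (by simpa using hm)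
  set w : m → EuclideanSpace 𝕜 n := fun j => (stdOrthonormalBasis 𝕜 K (e j) : _)
  have hw : Orthonormal 𝕜 w :=
    ((stdOrthonormalBasis 𝕜 K).orthonormal.comp e e.injective).comp_linearIsometry
      K.subtypeₗᵢ
  have hw' : Orthonormal 𝕜
      ((Set.range Sum.inl).domRestrict (Sum.elim w (0 : m' → EuclideanSpace 𝕜 n))) := by
    convert hw.comp _ (Equiv.ofInjective _ Sum.inl_injective).symm.injective
    ext ⟨_, j, rfl⟩ : 1
    simp
  obtain ⟨b, hb⟩ := hw'.exists_orthonormalBasis_extension_of_card_eq (by simp [hcard])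
  set a := EuclideanSpace.basisFun n 𝕜
  refine ⟨a.toBasis.toMatrix b, a.toMatrix_orthonormalBasis_conjTranspose_mul_self b,
    a.toMatrix_orthonormalBasis_self_mul_conjTranspose b, fun j => ?_⟩
  have : WithLp.toLp 2 (fun i => a.toBasis.toMatrix b i (Sum.inl j)) = w j := by
    rw [← Sum.elim_inl w (0 : m' → EuclideanSpace 𝕜 n) j, ← hb _ ⟨j, rfl⟩]
    ext i
    simp [a, Basis.toMatrix_apply]
  rw [this]
  exact (stdOrthonormalBasis 𝕜 K (e j)).2

theorem exists_unitary_fromCols_of_mul_mul_eq_zero {𝕜 n m m' : Type*} [RCLike 𝕜] [Fintype n]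
    [DecidableEq n] [Fintype m] [DecidableEq m] [Fintype m'] [DecidableEq m']
    {P A : Matrix n n 𝕜} (hP : P * P = P) (hPAP : P * A * P = 0)
    (hcard : Fintype.card m + Fintype.card m' = Fintype.card n)
    (hm : Fintype.card m + Fintype.card n ≤ 2 * P.rank) :
    ∃ (W : Matrix n m 𝕜) (V₂ : Matrix n m' 𝕜),
      (fromCols W V₂)ᴴ * fromCols W V₂ = 1 ∧ fromCols W V₂ * (fromCols W V₂)ᴴ = 1 ∧
        P * W = W ∧ A * W = 0 := by
  set p := toEuclideanLin P
  set a := toEuclideanLin A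
  have hdim := LinearMap.two_mul_finrank_range_le (p := p) (a := a) fun x => by
    simp [p, a, toLpLin_apply, mulVec_mulVec, ← Matrix.mul_assoc, hPAP]
  have hrank : P.rank = finrank 𝕜 (LinearMap.range p) := by
    rw [rank_eq_finrank_range_toLin P (PiLp.basisFun 2 𝕜 n) (PiLp.basisFun 2 𝕜 n),
      ← toLpLin_eq_toLin]
  obtain ⟨V, hV₁, hV₂, hVK⟩ := exists_unitary_inl_cols_mem (m' := m')
    (LinearMap.range p ⊓ LinearMap.ker a) (by rw [finrank_euclideanSpace] at hdim; omega) hcard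
  rw [← fromCols_toCols V] at hV₁ hV₂
  refine ⟨V.toCols₁, V.toCols₂, hV₁, hV₂, ?_, ?_⟩ <;> ext i j
  · obtain ⟨y, hy⟩ := (hVK j).1
    have hcol : (fun i => V i (Sum.inl j)) = P *ᵥ y.ofLp := congrArg WithLp.ofLp hy.symm
    change (P *ᵥ fun i => V i (Sum.inl j)) i = V i (Sum.inl j)
    rw [hcol, mulVec_mulVec, hP]
    exact congrFun hcol.symm i
  · exact congrArg (fun v => v.ofLp i) (hVK j).2

structure IsRankKCompression {n : Type*} [Fintype n] [DecidableEq n] (k : ℕ)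
    (T : Matrix n n ℂ) (lam : ℂ) (P : Matrix n n ℂ) : Prop where
  isHermitian : P.IsHermitian
  mul_self : P * P = P
  rank_eq : P.rank = k
  compress : P * T * P = lam • P

section Compression

variable {n m m' : Type*} [Fintype n] [DecidableEq n] [Fintype m] [DecidableEq m]
  [Fintype m'] [DecidableEq m'] {k : ℕ} {T P : Matrix n n ℂ} {lam : ℂ}

theorem mem_rankKRange_iff : lam ∈ rankKRange k T ↔ ∃ P, IsRankKCompression k T lam P :=
  ⟨fun ⟨P, h₁, h₂, h₃, h₄⟩ => ⟨P, h₁, h₂, h₃, h₄⟩,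
    fun ⟨P, h₁, h₂, h₃, h₄⟩ => ⟨P, h₁, h₂, h₃, h₄⟩⟩

theorem IsRankKCompression.conj (hP : IsRankKCompression k T lam P) {V : Matrix n m ℂ}
    (hV : V * Vᴴ = 1) : IsRankKCompression k (Vᴴ * T * V) lam (Vᴴ * P * V) := by
  have hidem : Vᴴ * P * V * (Vᴴ * P * V) = Vᴴ * P * V := by
    calc Vᴴ * P * V * (Vᴴ * P * V) = Vᴴ * (P * (V * Vᴴ) * P) * V := by
          simp only [Matrix.mul_assoc]
      _ = Vᴴ * P * V := by rw [hV, Matrix.mul_one, hP.mul_self, Matrix.mul_assoc]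
  refine ⟨?_, hidem, ?_, ?_⟩
  · exact isHermitian_conjTranspose_mul_mul V hP.isHermitian
  · apply Nat.cast_injective (R := ℂ)
    rw [rank_eq_trace_of_isIdempotentElem hidem, trace_mul_cycle, hV, Matrix.one_mul,
      ← rank_eq_trace_of_isIdempotentElem hP.mul_self, hP.rank_eq]
  · calc Vᴴ * P * V * (Vᴴ * T * V) * (Vᴴ * P * V)
        = Vᴴ * (P * (V * Vᴴ) * T * (V * Vᴴ) * P) * V := by simp only [Matrix.mul_assoc]
      _ = lam • (Vᴴ * P * V) := by
        rw [hV, Matrix.mul_one, Matrix.mul_one, hP.compress, Matrix.mul_smul, Matrix.smul_mul]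

theorem isRankKCompression_fromBlocks_iff {j : ℕ} {T₀ Q : Matrix m' m' ℂ} :
    IsRankKCompression (Fintype.card m + j) (fromBlocks (lam • (1 : Matrix m m ℂ)) 0 0 T₀) lam
      (fromBlocks 1 0 0 Q) ↔ IsRankKCompression j T₀ lam Q := by
  have hherm : (fromBlocks (1 : Matrix m m ℂ) 0 0 Q).IsHermitian ↔ Q.IsHermitian := by
    simp [IsHermitian, fromBlocks_conjTranspose, fromBlocks_inj]
  have hidem : fromBlocks (1 : Matrix m m ℂ) 0 0 Q * fromBlocks 1 0 0 Q = fromBlocks 1 0 0 Q ↔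
      Q * Q = Q := by
    simp [fromBlocks_multiply, fromBlocks_inj]
  have hcompress : fromBlocks (1 : Matrix m m ℂ) 0 0 Q * fromBlocks (lam • 1) 0 0 T₀ *
      fromBlocks 1 0 0 Q = lam • fromBlocks 1 0 0 Q ↔ Q * T₀ * Q = lam • Q := by
    simp [fromBlocks_multiply, fromBlocks_smul, fromBlocks_inj]
  constructor
  · rintro ⟨h₁, h₂, h₃, h₄⟩
    refine ⟨hherm.1 h₁, hidem.1 h₂, ?_, hcompress.1 h₄⟩
    rw [rank_fromBlocks_one_of_isIdempotentElem (hidem.1 h₂)] at h₃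
    omega
  · rintro ⟨h₁, h₂, h₃, h₄⟩
    exact ⟨hherm.2 h₁, hidem.2 h₂, by rw [rank_fromBlocks_one_of_isIdempotentElem h₂, h₃],
      hcompress.2 h₄⟩

theorem mem_rankKRange_iff_exists_unitary_fromBlocks (hT : T * Tᴴ = Tᴴ * T) {j : ℕ}
    (hcard : Fintype.card m + Fintype.card m' = Fintype.card n)
    (hj : Fintype.card n ≤ Fintype.card m + 2 * j) :
    lam ∈ rankKRange (Fintype.card m + j) T ↔
      ∃ (T₀ : Matrix m' m' ℂ) (V : Matrix n (m ⊕ m') ℂ), Vᴴ * V = 1 ∧ V * Vᴴ = 1 ∧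
        Vᴴ * T * V = fromBlocks (lam • 1) 0 0 T₀ ∧ lam ∈ rankKRange j T₀ := by
  simp only [mem_rankKRange_iff]
  constructor
  · rintro ⟨P, hP⟩
    have hPAP : P * (T - lam • 1) * P = 0 := by
      rw [Matrix.mul_sub, Matrix.sub_mul, hP.compress, Matrix.mul_smul, Matrix.mul_one,
        Matrix.smul_mul, hP.mul_self, sub_self]
    obtain ⟨W, V₂, hV₁, hV₂, hPW, hAW⟩ :=
      exists_unitary_fromCols_of_mul_mul_eq_zero hP.mul_self hPAP hcard (by rw [hP.rank_eq]; omega)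
    have hTW : T * W = lam • W := by
      rwa [Matrix.sub_mul, Matrix.smul_mul, Matrix.one_mul, sub_eq_zero] at hAW
    have hWP : Wᴴ * P = Wᴴ := by
      rw [← hP.isHermitian.eq, ← conjTranspose_mul, hPW]
    have hTblocks := conjTranspose_fromCols_mul_mul_fromCols hV₁ hTW
      (conjTranspose_mul_eq_smul_of_mul_eq_smul hT hTW)
    have hPblocks := conjTranspose_fromCols_mul_mul_fromCols (c := 1) hV₁
      (by rwa [one_smul]) (by rwa [one_smul])
    have hconj := hP.conj hV₂
    rw [hTblocks, hPblocks, one_smul] at hconj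
    exact ⟨_, _, hV₁, hV₂, hTblocks, _, isRankKCompression_fromBlocks_iff.1 hconj⟩
  · rintro ⟨T₀, V, hV₁, hV₂, hblocks, Q, hQ⟩
    have := (isRankKCompression_fromBlocks_iff.2 hQ).conj (V := Vᴴ)
      (by rwa [conjTranspose_conjTranspose])
    have hT : V * (Vᴴ * T * V) * Vᴴ = T := by
      simp only [← Matrix.mul_assoc, hV₂, Matrix.one_mul]
      rw [Matrix.mul_assoc, hV₂, Matrix.mul_one]
    rw [← hblocks, conjTranspose_conjTranspose, hT] at this
    exact ⟨_, this⟩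

end Compression

/-- for normal T and 2k > N, λ₀ ∈ Λ_k(T) iff T is unitarily equivalent
to λ₀·I_{2k−N} ⊕ T₀ with λ₀ ∈ Λ_{N−k}(T₀). -/
theorem rankKRange_normal_two_k_gt (N k : ℕ) (hk : 2 * k > N)
    (T : Matrix (Fin N) (Fin N) ℂ) (hT : T * Tᴴ = Tᴴ * T) (lam₀ : ℂ) :
    lam₀ ∈ rankKRange k T ↔
      ∃ (T₀ : Matrix (Fin (2 * N - 2 * k)) (Fin (2 * N - 2 * k)) ℂ)
        (V : Matrix (Fin N) (Fin (2 * k - N) ⊕ Fin (2 * N - 2 * k)) ℂ),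
          Vᴴ * V = 1 ∧ V * Vᴴ = 1 ∧
          Vᴴ * T * V =
            Matrix.fromBlocks (lam₀ • (1 : Matrix (Fin (2 * k - N)) (Fin (2 * k - N)) ℂ)) 0 0 T₀ ∧
          lam₀ ∈ rankKRange (N - k) T₀ := by
  by_cases hkN : k ≤ N
  · have h := mem_rankKRange_iff_exists_unitary_fromBlocks (m := Fin (2 * k - N))
      (m' := Fin (2 * N - 2 * k)) (j := N - k) (lam := lam₀) hT
      (by simp only [Fintype.card_fin]; omega) (by simp only [Fintype.card_fin]; omega)
    rwa [Fintype.card_fin, show 2 * k - N + (N - k) = k by omega] at h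
  -- For `k > N` the sizes `2 * N - 2 * k` truncate to `0`, and both sides fail for dimension
  -- reasons.
  · refine iff_of_false (fun ⟨P, _, _, hP, _⟩ => ?_) (fun ⟨_, V, hV, _⟩ => ?_)
    · have := P.rank_le_width
      omega
    · have := card_le_card_of_mul_eq_one hV
      simp only [Fintype.card_sum, Fintype.card_fin] at this
      omega
end

section
/- Let A be an N×N Hermitian complex matrix with eigenvalues (counted with multiplicity, in nondecreasing order) a₁ ≤ a₂ ≤ … ≤ a_N, and let k be an integer with 1 ≤ k ≤ N. Then the rank-k numerical range Λ_k(A) equals the closed real interval [a_k, a_{N−k+1}] regarded as a subset of ℂ; in particular it is a non-degenerate closed interval if a_k < a_{N−k+1}, the singleton {a_k} if a_k = a_{N−k+1}, and empty if a_k > a_{N−k+1}. -/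
/-!
Conjugation by `U` preserves rank-`k` numerical ranges, so `A` may be taken diagonal,
`D = diag(a)`. If `P D P = λ P` with `P` a projection of rank `k`, then every `x ∈ range P`
satisfies `x* D x = λ x* x`. A `k`-dimensional space contains a nonzero vector vanishing on any
`k - 1` prescribed coordinates; killing the coordinates below `k - 1`, resp. above `N - k`,
(0-indexed) shows `a_{k-1} ≤ λ ≤ a_{N-k}`.

Conversely, for `λ` in that interval pair each `j < k` with `N - 1 - j` when `j < N - k`, and
with itself otherwise (then `a_j = λ`). In every pair `λ` is a convex combination of the two
eigenvalues, giving a unit vector `w_j` on those coordinates with `w_j* D w_j = λ`. The pairs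
are disjoint, so the `w_j` are orthonormal, `W Wᴴ` is a projection of rank `k`, and
`Wᴴ D W = λ`.
-/

open Matrix Complex

theorem Submodule.exists_mem_ne_zero_forall_eq_zero {K n : Type*} [Field K] [Fintype n]
    (S : Submodule K (n → K)) (s : Finset n) (hs : s.card < Module.finrank K S) :
    ∃ x ∈ S, x ≠ 0 ∧ ∀ i ∈ s, x i = 0 := by
  let restrict : S →ₗ[K] s → K := LinearMap.funLeft K K ((↑) : s → n) ∘ₗ S.subtype
  obtain ⟨⟨x, hxS⟩, hx, hx0⟩ := Submodule.exists_mem_ne_zero_of_ne_bot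
    (restrict.ker_ne_bot_of_finrank_lt (by simpa using hs))
  exact ⟨x, hxS, by simpa using hx0, fun i hi => congrFun hx ⟨i, hi⟩⟩

section

variable {n : Type*} [Fintype n]

theorem rankKRange_subset_unitary_conj [DecidableEq n] (k : ℕ) (T : Matrix n n ℂ)
    {U : Matrix n n ℂ} (hU : U ∈ unitaryGroup n ℂ) :
    rankKRange k T ⊆ rankKRange k (U * T * Uᴴ) := by
  rintro μ ⟨P, hPh, hPP, hPk, hPT⟩
  have hUU : Uᴴ * U = 1 := mem_unitaryGroup_iff'.mp hU
  refine ⟨U * P * Uᴴ, isHermitian_mul_mul_conjTranspose U hPh, ?_, ?_, ?_⟩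
  · calc U * P * Uᴴ * (U * P * Uᴴ) = U * (P * (Uᴴ * U) * P) * Uᴴ := by
          simp only [Matrix.mul_assoc]
      _ = U * P * Uᴴ := by rw [hUU, Matrix.mul_one, hPP, Matrix.mul_assoc]
  · rw [rank_mul_eq_left_of_isUnit_det Uᴴ _ (isUnit_det_of_right_inverse hUU),
      rank_mul_eq_right_of_isUnit_det U _ (isUnit_det_of_left_inverse hUU), hPk]
  · calc U * P * Uᴴ * (U * T * Uᴴ) * (U * P * Uᴴ)
          = U * (P * (Uᴴ * U) * T * (Uᴴ * U) * P) * Uᴴ := by simp only [Matrix.mul_assoc]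
      _ = μ • (U * P * Uᴴ) := by
          rw [hUU, Matrix.mul_one, Matrix.mul_one, hPT, Matrix.mul_smul, Matrix.smul_mul]

theorem rankKRange_unitary_conj [DecidableEq n] (k : ℕ) (T : Matrix n n ℂ)
    {U : Matrix n n ℂ} (hU : U ∈ unitaryGroup n ℂ) :
    rankKRange k (U * T * Uᴴ) = rankKRange k T := by
  refine (rankKRange_subset_unitary_conj k T hU).antisymm' ?_
  have hUU : Uᴴ * U = 1 := mem_unitaryGroup_iff'.mp hU
  calc rankKRange k (U * T * Uᴴ) ⊆ rankKRange k (Uᴴ * (U * T * Uᴴ) * Uᴴᴴ) :=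
        rankKRange_subset_unitary_conj k _ (Unitary.star_mem hU)
    _ = rankKRange k T := by
        rw [conjTranspose_conjTranspose]
        congr 1
        calc Uᴴ * (U * T * Uᴴ) * U = (Uᴴ * U) * T * (Uᴴ * U) := by
              simp only [Matrix.mul_assoc]
          _ = T := by rw [hUU, Matrix.one_mul, Matrix.mul_one]

open scoped ComplexOrder in
theorem mem_rankKRange_of_conjTranspose_mul_self_eq_one [DecidableEq n]
    {m : Type*} [Fintype m] [DecidableEq m] {T : Matrix n n ℂ} {μ : ℂ} (W : Matrix n m ℂ)
    (hW : Wᴴ * W = 1) (hT : Wᴴ * T * W = μ • 1) :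
    μ ∈ rankKRange (Fintype.card m) T := by
  refine ⟨W * Wᴴ, isHermitian_mul_conjTranspose_self W, ?_, ?_, ?_⟩
  · rw [Matrix.mul_assoc, ← Matrix.mul_assoc Wᴴ, hW, Matrix.one_mul]
  · rw [rank_self_mul_conjTranspose, ← rank_conjTranspose_mul_self, hW, rank_one]
  · calc W * Wᴴ * T * (W * Wᴴ) = W * (Wᴴ * T * W) * Wᴴ := by simp only [Matrix.mul_assoc]
      _ = μ • (W * Wᴴ) := by rw [hT, Matrix.mul_smul, Matrix.mul_one, Matrix.smul_mul]

theorem star_dotProduct_mulVec_eq_mul {P T : Matrix n n ℂ} {μ : ℂ} (hP : P.IsHermitian)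
    (h : P * T * P = μ • P) {x : n → ℂ} (hx : P *ᵥ x = x) :
    star x ⬝ᵥ T *ᵥ x = μ * (star x ⬝ᵥ x) := by
  have hxP : star x ᵥ* P = star x := by rw [← hP.eq, ← star_mulVec, hx]
  calc star x ⬝ᵥ T *ᵥ x = star x ⬝ᵥ (P * T * P) *ᵥ x := by
        rw [← mulVec_mulVec, ← mulVec_mulVec, hx, dotProduct_mulVec (star x) P, hxP]
    _ = μ * (star x ⬝ᵥ x) := by rw [h, smul_mulVec, dotProduct_smul, hx, smul_eq_mul]

theorem star_dotProduct_diagonal_mulVec [DecidableEq n] (a : n → ℝ) (x : n → ℂ) :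
    star x ⬝ᵥ diagonal (fun i => (a i : ℂ)) *ᵥ x = ((∑ i, a i * normSq (x i) : ℝ) : ℂ) := by
  simp only [dotProduct, mulVec_diagonal, Pi.star_apply, ofReal_sum, ofReal_mul,
    normSq_eq_conj_mul_self, RCLike.star_def]
  exact Finset.sum_congr rfl fun i _ => by ring

noncomputable def diagonalRayleigh (a : n → ℝ) (x : n → ℂ) : ℝ :=
  (∑ i, a i * normSq (x i)) / ∑ i, normSq (x i)

theorem sum_normSq_pos {x : n → ℂ} (hx : x ≠ 0) : 0 < ∑ i, normSq (x i) := by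
  obtain ⟨i, hi⟩ := Function.ne_iff.mp hx
  exact Finset.sum_pos' (fun j _ => normSq_nonneg (x j))
    ⟨i, Finset.mem_univ i, normSq_pos.mpr hi⟩

theorem le_diagonalRayleigh {a : n → ℝ} {x : n → ℂ} {s : Finset n} {c : ℝ} (hx : x ≠ 0)
    (hxs : ∀ i ∈ s, x i = 0) (ha : ∀ i ∉ s, c ≤ a i) : c ≤ diagonalRayleigh a x := by
  rw [diagonalRayleigh, le_div_iff₀ (sum_normSq_pos hx), Finset.mul_sum]
  refine Finset.sum_le_sum fun i _ => ?_
  by_cases hi : i ∈ s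
  · simp [hxs i hi]
  · exact mul_le_mul_of_nonneg_right (ha i hi) (normSq_nonneg _)

theorem diagonalRayleigh_le {a : n → ℝ} {x : n → ℂ} {s : Finset n} {c : ℝ} (hx : x ≠ 0)
    (hxs : ∀ i ∈ s, x i = 0) (ha : ∀ i ∉ s, a i ≤ c) : diagonalRayleigh a x ≤ c := by
  rw [diagonalRayleigh, div_le_iff₀ (sum_normSq_pos hx), Finset.mul_sum]
  refine Finset.sum_le_sum fun i _ => ?_
  by_cases hi : i ∈ s
  · simp [hxs i hi]
  · exact mul_le_mul_of_nonneg_right (ha i hi) (normSq_nonneg _)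

theorem exists_eq_diagonalRayleigh_of_mem_rankKRange [DecidableEq n] {k : ℕ} {a : n → ℝ}
    {μ : ℂ} (hμ : μ ∈ rankKRange k (diagonal fun i => (a i : ℂ))) (s : Finset n)
    (hs : s.card < k) :
    ∃ x : n → ℂ, x ≠ 0 ∧ (∀ i ∈ s, x i = 0) ∧ μ = diagonalRayleigh a x := by
  obtain ⟨P, hPh, hPP, hPk, hPT⟩ := hμ
  obtain ⟨x, hxP, hx0, hxs⟩ :=
    (LinearMap.range P.mulVecLin).exists_mem_ne_zero_forall_eq_zero s (by rwa [← hPk] at hs)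
  have hPx : P *ᵥ x = x := by
    obtain ⟨y, rfl⟩ := hxP
    simp only [mulVecLin_apply, mulVec_mulVec, hPP]
  refine ⟨x, hx0, hxs, ?_⟩
  have hquad := star_dotProduct_mulVec_eq_mul hPh hPT hPx
  have hnorm : star x ⬝ᵥ x = ((∑ i, normSq (x i) : ℝ) : ℂ) := by
    simpa using star_dotProduct_diagonal_mulVec (fun _ => 1) x
  rw [star_dotProduct_diagonal_mulVec, hnorm] at hquad
  rw [diagonalRayleigh, ofReal_div, eq_div_iff (ofReal_ne_zero.mpr (sum_normSq_pos hx0).ne'),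
    hquad]

theorem exists_sum_normSq_eq_one_of_mem_Icc [DecidableEq n] (a : n → ℝ) {p q : n} {μ : ℝ}
    (hμ : μ ∈ Set.Icc (a p) (a q)) :
    ∃ w : n → ℂ, (∀ l, l ≠ p → l ≠ q → w l = 0) ∧
      ∑ l, normSq (w l) = 1 ∧ ∑ l, a l * normSq (w l) = μ := by
  rcases eq_or_ne p q with rfl | hpq
  · refine ⟨Pi.single p 1, fun l hl _ => Pi.single_eq_of_ne hl _, ?_, ?_⟩
    · simp [Pi.single_apply, apply_ite]
    · simp [Pi.single_apply, apply_ite, le_antisymm hμ.2 hμ.1]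
  · rw [← segment_eq_Icc (hμ.1.trans hμ.2)] at hμ
    obtain ⟨s, t, hs, ht, hst, rfl⟩ := hμ
    have hqp : q ≠ p := hpq.symm
    refine ⟨fun l => if l = p then (√s : ℂ) else if l = q then (√t : ℂ) else 0,
      fun l hlp hlq => by simp [hlp, hlq], ?_, ?_⟩
    · rw [Fintype.sum_eq_add p q hpq (fun l hl => by simp [hl.1, hl.2])]
      simp [hqp, normSq_ofReal, Real.mul_self_sqrt hs, Real.mul_self_sqrt ht, hst]
    · rw [Fintype.sum_eq_add p q hpq (fun l hl => by simp [hl.1, hl.2])]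
      simp only [↓reduceIte, hqp, normSq_ofReal, Real.mul_self_sqrt hs, Real.mul_self_sqrt ht,
        smul_eq_mul]
      ring

theorem conjTranspose_mul_diagonal_mul_of_disjoint [DecidableEq n] {m : Type*} [DecidableEq m]
    (W : Matrix n m ℂ) (hW : ∀ l {i j}, i ≠ j → W l i = 0 ∨ W l j = 0) (d : n → ℝ) :
    Wᴴ * diagonal (fun l => (d l : ℂ)) * W =
      diagonal fun j => ((∑ l, d l * normSq (W l j) : ℝ) : ℂ) := by
  ext i j
  simp only [mul_apply, conjTranspose_apply, diagonal_apply, mul_ite, mul_zero,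
    Finset.sum_ite_eq', Finset.mem_univ, if_true]
  rcases eq_or_ne i j with rfl | hij
  · simp only [if_true, ofReal_sum, ofReal_mul, normSq_eq_conj_mul_self, RCLike.star_def]
    exact Finset.sum_congr rfl fun l _ => by ring
  · rw [if_neg hij]
    refine Finset.sum_eq_zero fun l _ => ?_
    rcases hW l hij with h | h <;> simp [h]

theorem mem_rankKRange_diagonal_of_disjoint [DecidableEq n] {m : Type*} [Fintype m]
    [DecidableEq m] (a : n → ℝ) {μ : ℝ} (W : Matrix n m ℂ)
    (hW : ∀ l {i j}, i ≠ j → W l i = 0 ∨ W l j = 0)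
    (hnorm : ∀ j, ∑ l, normSq (W l j) = 1) (hval : ∀ j, ∑ l, a l * normSq (W l j) = μ) :
    (μ : ℂ) ∈ rankKRange (Fintype.card m) (diagonal fun i => (a i : ℂ)) := by
  apply mem_rankKRange_of_conjTranspose_mul_self_eq_one W
  · simpa [hnorm] using conjTranspose_mul_diagonal_mul_of_disjoint W hW 1
  · rw [conjTranspose_mul_diagonal_mul_of_disjoint W hW a]
    simp [hval, smul_one_eq_diagonal]

end

def partnerIndex {N k : ℕ} (hkN : k ≤ N) (j : Fin k) : Fin N :=
  if (j : ℕ) < N - k then (Fin.castLE hkN j).rev else Fin.castLE hkN j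

theorem le_partnerIndex {N k : ℕ} (hkN : k ≤ N) (j : Fin k) :
    N - k ≤ (partnerIndex hkN j : ℕ) := by
  unfold partnerIndex
  split_ifs <;> simp <;> omega

theorem eq_of_partnerIndex {N k : ℕ} (hkN : k ≤ N) {i j : Fin k} {l : Fin N}
    (hi : l = Fin.castLE hkN i ∨ l = partnerIndex hkN i)
    (hj : l = Fin.castLE hkN j ∨ l = partnerIndex hkN j) : i = j := by
  simp only [partnerIndex, Fin.ext_iff, Fin.val_castLE, apply_ite Fin.val, Fin.val_rev] at hi hj
  ext
  split_ifs at hi hj <;> omega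

section

variable {N k : ℕ} (hk1 : 1 ≤ k) (hkN : k ≤ N) {a : Fin N → ℝ}

theorem Icc_subset_rankKRange_diagonal (ha : Monotone a) :
    (fun x : ℝ => (x : ℂ)) '' Set.Icc (a ⟨k - 1, Nat.sub_one_lt_of_le hk1 hkN⟩)
        (a ⟨N - k, Nat.sub_lt_of_pos_le hk1 hkN⟩) ⊆
      rankKRange k (diagonal fun i => (a i : ℂ)) := by
  rintro _ ⟨μ, hμ, rfl⟩
  have hpair : ∀ j, μ ∈ Set.Icc (a (Fin.castLE hkN j)) (a (partnerIndex hkN j)) := fun j =>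
    ⟨(ha (Nat.le_sub_one_of_lt j.isLt)).trans hμ.1,
      hμ.2.trans (ha (le_partnerIndex hkN j))⟩
  choose w hw_supp hw_norm hw_val using fun j => exists_sum_normSq_eq_one_of_mem_Icc a (hpair j)
  have hsupp : ∀ j l, w j l ≠ 0 → l = Fin.castLE hkN j ∨ l = partnerIndex hkN j := by
    intro j l hl
    by_contra! h
    exact hl (hw_supp j l h.1 h.2)
  simpa using mem_rankKRange_diagonal_of_disjoint a (of fun l j => w j l)
    (fun l i j hij => by
      by_contra! h
      exact hij (eq_of_partnerIndex hkN (hsupp i l h.1) (hsupp j l h.2)))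
    hw_norm hw_val

theorem rankKRange_diagonal_subset_Icc (ha : Monotone a) :
    rankKRange k (diagonal fun i => (a i : ℂ)) ⊆
      (fun x : ℝ => (x : ℂ)) '' Set.Icc (a ⟨k - 1, Nat.sub_one_lt_of_le hk1 hkN⟩)
        (a ⟨N - k, Nat.sub_lt_of_pos_le hk1 hkN⟩) := by
  intro μ hμ
  obtain ⟨x, hx0, hxs, rfl⟩ := exists_eq_diagonalRayleigh_of_mem_rankKRange hμ
    (Finset.Iio ⟨k - 1, Nat.sub_one_lt_of_le hk1 hkN⟩) (by simp only [Fin.card_Iio]; omega)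
  obtain ⟨y, hy0, hys, hxy⟩ := exists_eq_diagonalRayleigh_of_mem_rankKRange hμ
    (Finset.Ioi ⟨N - k, Nat.sub_lt_of_pos_le hk1 hkN⟩) (by simp only [Fin.card_Ioi]; omega)
  refine ⟨_, ⟨le_diagonalRayleigh hx0 hxs fun i hi => ha (by simpa using hi), ?_⟩, rfl⟩
  rw [ofReal_injective hxy]
  exact diagonalRayleigh_le hy0 hys fun i hi => ha (by simpa using hi)

end

/-- for Hermitian A with nondecreasing eigenvalues a₁ ≤ … ≤ a_N,
Λ_k(A) = [a_k, a_{N−k+1}] (as a subset of ℂ). -/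
theorem rankKRange_hermitian_eq_Icc (N k : ℕ) (hk1 : 1 ≤ k) (hkN : k ≤ N)
    (A : Matrix (Fin N) (Fin N) ℂ)
    (a : Fin N → ℝ) (ha : Monotone a)
    (U : Matrix (Fin N) (Fin N) ℂ) (hU : U ∈ Matrix.unitaryGroup (Fin N) ℂ)
    (hdiag : A = U * Matrix.diagonal (fun i => (a i : ℂ)) * Uᴴ) :
    rankKRange k A =
      (fun x : ℝ => (x : ℂ)) ''
        Set.Icc (a ⟨k - 1, by omega⟩) (a ⟨N - k, by omega⟩) := by
  rw [hdiag, rankKRange_unitary_conj k _ hU]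
  exact (rankKRange_diagonal_subset_Icc hk1 hkN ha).antisymm
    (Icc_subset_rankKRange_diagonal hk1 hkN ha)
end

section
/- Let T be an N×N normal complex matrix, diagonalized as U*TU = diag(d₁, …, d_N) for some unitary U and d : Fin N → ℂ, and let k be an integer with 1 ≤ k ≤ N. Then for every subset S of the index set {1, …, N} of cardinality N + 1 − k, the rank-k numerical range Λ_k(T) is contained in the convex hull (over ℝ, in ℂ ≅ ℝ²) of the eigenvalues {d_i : i ∈ S}. In particular, Λ_k(T) ⊆ ⋂_Γ co Γ, where Γ runs over all (N+1−k)-point subsets, counted with multiplicity, of the spectrum of T. -/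
open Matrix Complex

private lemma dotProduct_finset_sum {ι n : Type*} [Fintype n] (s : Finset ι)
    (v : n → ℂ) (f : ι → n → ℂ) :
    v ⬝ᵥ (∑ i ∈ s, f i) = ∑ i ∈ s, v ⬝ᵥ f i := by
  simp only [dotProduct, Finset.sum_apply, Finset.mul_sum]
  rw [Finset.sum_comm]

/-- for normal T with eigenvalues d₁, …, d_N, Λ_k(T) is contained in the
convex hull of any N+1−k of the eigenvalues (counted with multiplicity). -/
theorem rankKRange_normal_subset_convexHull (N k : ℕ) (hk1 : 1 ≤ k) (hkN : k ≤ N)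
    (T : Matrix (Fin N) (Fin N) ℂ) (hT : T * Tᴴ = Tᴴ * T)
    (U : Matrix (Fin N) (Fin N) ℂ) (hU : U ∈ Matrix.unitaryGroup (Fin N) ℂ)
    (d : Fin N → ℂ) (hdiag : Uᴴ * T * U = Matrix.diagonal d) :
    ∀ S : Finset (Fin N), S.card = N + 1 - k →
      rankKRange k T ⊆ convexHull ℝ (d '' (S : Set (Fin N))) := by
  intro S hS lam hlam
  obtain ⟨P, hP, hP2, hPrank, hPTP⟩ := hlam
  -- columns of U
  set u : Fin N → (Fin N → ℂ) := fun i j => U j i with hu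
  have hUU : Uᴴ * U = 1 := by
    simpa [star_eq_conjTranspose] using hU.1
  have hUU' : U * Uᴴ = 1 := by
    simpa [star_eq_conjTranspose] using hU.2
  -- orthonormality of columns
  have horth : ∀ i j, star (u i) ⬝ᵥ u j = if i = j then 1 else 0 := by
    intro i j
    have := congrFun (congrFun hUU i) j
    simpa [Matrix.mul_apply, Matrix.one_apply, dotProduct, conjTranspose_apply, hu,
      mul_comm] using this
  -- eigenvector equation
  have hTU : T * U = U * Matrix.diagonal d := by
    calc T * U = U * (Uᴴ * T * U) := by
          rw [← Matrix.mul_assoc, ← Matrix.mul_assoc, hUU', Matrix.one_mul]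
      _ = U * Matrix.diagonal d := by rw [hdiag]
  have heig : ∀ i, T *ᵥ u i = d i • u i := by
    intro i
    funext j
    have := congrFun (congrFun hTU j) i
    simpa [Matrix.mul_apply, Matrix.mulVec, dotProduct, Matrix.diagonal, hu,
      Finset.mul_sum, mul_comm] using this
  -- the two subspaces
  set b : {i // i ∈ S} → (Fin N → ℂ) := fun i => u (i : Fin N) with hb
  have hbli : LinearIndependent ℂ b := by
    rw [Fintype.linearIndependent_iff]
    intro c hc j
    have h0 : star (u (j : Fin N)) ⬝ᵥ (∑ i, c i • b i) = 0 := by rw [hc]; simp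
    rw [dotProduct_finset_sum] at h0
    have h1 : ∀ i : {i // i ∈ S},
        star (u (j : Fin N)) ⬝ᵥ (c i • b i) = if i = j then c j else 0 := by
      intro i
      rw [dotProduct_smul, hb, horth]
      by_cases h : i = j
      · subst h; simp
      · have : (j : Fin N) ≠ (i : Fin N) := fun hh => h (Subtype.ext hh.symm)
        simp [h, this]
    rw [Finset.sum_congr rfl fun i _ => h1 i] at h0
    simpa using h0
  set V₁ : Submodule ℂ (Fin N → ℂ) := LinearMap.range P.mulVecLin with hV₁
  set V₂ : Submodule ℂ (Fin N → ℂ) := Submodule.span ℂ (Set.range b) with hV₂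
  have hV₁rank : Module.finrank ℂ V₁ = k := hPrank
  have hV₂rank : Module.finrank ℂ V₂ = N + 1 - k := by
    rw [hV₂, finrank_span_eq_card hbli, Fintype.card_coe, hS]
  -- intersection nonzero
  have hinf : V₁ ⊓ V₂ ≠ ⊥ := by
    intro hbot
    have hsum := Submodule.finrank_sup_add_finrank_inf_eq V₁ V₂
    rw [hbot, finrank_bot, add_zero, hV₁rank, hV₂rank] at hsum
    have hle : Module.finrank ℂ ↥(V₁ ⊔ V₂) ≤ Module.finrank ℂ (Fin N → ℂ) :=
      Submodule.finrank_le _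
    rw [hsum, Module.finrank_pi, Fintype.card_fin] at hle
    omega
  obtain ⟨x, hxmem, hx0⟩ := Submodule.ne_bot_iff _ |>.1 hinf
  obtain ⟨y, hy⟩ := hxmem.1
  have hxspan : x ∈ Submodule.span ℂ (Set.range b) := hxmem.2
  obtain ⟨c, hc⟩ := (Submodule.mem_span_range_iff_exists_fun ℂ).1 hxspan
  -- P fixes x
  have hPx : P *ᵥ x = x := by
    rw [← hy, Matrix.mulVecLin_apply, mulVec_mulVec, hP2]
  have hstarP : star x ᵥ* P = star x := by
    conv_lhs => rw [← hP.eq]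
    rw [← star_mulVec, hPx]
  -- key identity
  have key : star x ⬝ᵥ (T *ᵥ x) = lam * (star x ⬝ᵥ x) := by
    calc star x ⬝ᵥ (T *ᵥ x)
        = (star x ᵥ* P) ⬝ᵥ (T *ᵥ (P *ᵥ x)) := by rw [hstarP, hPx]
      _ = star x ⬝ᵥ (P *ᵥ (T *ᵥ (P *ᵥ x))) := (dotProduct_mulVec _ _ _).symm
      _ = star x ⬝ᵥ ((P * T * P) *ᵥ x) := by
          rw [mulVec_mulVec, mulVec_mulVec, Matrix.mul_assoc]
      _ = star x ⬝ᵥ ((lam • P) *ᵥ x) := by rw [hPTP]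
      _ = lam * (star x ⬝ᵥ x) := by
          rw [smul_mulVec, dotProduct_smul, smul_eq_mul, hPx]
  -- coefficients
  have hcoef : ∀ j : {i // i ∈ S}, star x ⬝ᵥ u (j : Fin N) = star (c j) := by
    intro j
    have h1 : star (u (j : Fin N)) ⬝ᵥ x = c j := by
      rw [← hc, dotProduct_finset_sum]
      have h2 : ∀ i : {i // i ∈ S},
          star (u (j : Fin N)) ⬝ᵥ (c i • b i) = if i = j then c j else 0 := by
        intro i
        rw [dotProduct_smul, hb, horth]
        by_cases h : i = j
        · subst h; simp
        · have : (j : Fin N) ≠ (i : Fin N) := fun hh => h (Subtype.ext hh.symm)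
          simp [h, this]
      rw [Finset.sum_congr rfl fun i _ => h2 i]
      simp
    rw [Matrix.star_dotProduct]
    simp [h1]
  have hxx : star x ⬝ᵥ x = ∑ j, star (c j) * c j := by
    nth_rewrite 2 [← hc]
    rw [dotProduct_finset_sum]
    exact Finset.sum_congr rfl fun j _ => by
      rw [dotProduct_smul, smul_eq_mul, hb, hcoef j, mul_comm]
  have hTxx : star x ⬝ᵥ (T *ᵥ x) = ∑ j, star (c j) * c j * d (j : Fin N) := by
    have hTx : T *ᵥ x = ∑ j, (c j * d (j : Fin N)) • u (j : Fin N) := by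
      conv_lhs => rw [← hc]
      rw [← Matrix.mulVecLin_apply, map_sum]
      exact Finset.sum_congr rfl fun j _ => by
        rw [_root_.map_smul, Matrix.mulVecLin_apply, hb, heig, smul_smul]
    rw [hTx, dotProduct_finset_sum]
    exact Finset.sum_congr rfl fun j _ => by
      rw [dotProduct_smul, smul_eq_mul, hcoef j]; ring
  -- real weights
  set w : {i // i ∈ S} → ℝ := fun j => Complex.normSq (c j) with hw
  have hwc : ∀ j, (w j : ℂ) = star (c j) * c j := by
    intro j
    simp [hw, Complex.normSq_eq_conj_mul_self]
  have hwpos : 0 < ∑ j, w j := by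
    rcases (lt_or_eq_of_le (Finset.sum_nonneg fun j _ => Complex.normSq_nonneg (c j))) with h | h
    · exact h
    have hczero : ∀ j : {i // i ∈ S}, c j = 0 := by
      intro j
      have := (Finset.sum_eq_zero_iff_of_nonneg
        (fun j _ => Complex.normSq_nonneg (c j))).1 h.symm j (Finset.mem_univ j)
      exact Complex.normSq_eq_zero.1 this
    exact absurd (by rw [← hc]; simp [hczero]) hx0
  -- lam is the center of mass
  have hsum : (↑(∑ j, w j) : ℂ) = star x ⬝ᵥ x := by
    rw [hxx]; push_cast [hwc]; rfl
  have hlam : lam = Finset.univ.centerMass w fun j : {i // i ∈ S} => d (j : Fin N) := by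
    rw [Finset.centerMass]
    have h1 : lam * ↑(∑ j, w j) = ∑ j, w j • d (j : Fin N) := by
      rw [hsum, ← key, hTxx]
      exact Finset.sum_congr rfl fun j _ => by
        rw [Complex.real_smul, hwc]
    have h2 : (↑(∑ j, w j) : ℂ) ≠ 0 := by
      exact_mod_cast ne_of_gt hwpos
    calc lam = (↑(∑ j, w j) : ℂ)⁻¹ * (lam * ↑(∑ j, w j)) := by
          rw [mul_comm ((↑(∑ j, w j) : ℂ))⁻¹, mul_assoc, mul_inv_cancel₀ h2, mul_one]
      _ = (↑(∑ j, w j) : ℂ)⁻¹ * ∑ j, w j • d (j : Fin N) := by rw [h1]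
      _ = (∑ j, w j)⁻¹ • ∑ j, w j • d (j : Fin N) := by
          rw [Complex.real_smul, Complex.ofReal_inv]
  rw [hlam]
  exact Finset.centerMass_mem_convexHull _ (fun j _ => Complex.normSq_nonneg _)
    hwpos (fun j _ => ⟨(j : Fin N), j.2, rfl⟩)
end

section
/- Let U be the cyclic 5-shift on ℂ⁵, i.e. the unitary matrix defined on the standard orthonormal basis e₀, …, e₄ by U e_j = e_{j+1 (mod 5)}. Then 0 belongs to the rank-2 numerical range Λ₂(U); that is, there exists an orthogonal projection P of rank 2 on ℂ⁵ with PUP = 0. -/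
open Matrix Complex

/-!
The orthogonal projection onto `span {e₀, e₂}` compresses `U` to zero: `U` maps `e₀, e₂` to
`e₁, e₃`, which are orthogonal to that span. More generally, the coordinate projection onto
`span {eᵢ | i ∈ S}` witnesses `0 ∈ Λ_{|S|}(T)` whenever the block of `T` on `S × S` vanishes.
-/

namespace Matrix

variable {n R : Type*} [DecidableEq n]

def coordProj [Zero R] [One R] (S : Finset n) : Matrix n n R :=
  diagonal fun i => if i ∈ S then 1 else 0

theorem isHermitian_coordProj [Semiring R] [StarRing R] (S : Finset n) :
    (coordProj S : Matrix n n R).IsHermitian :=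
  isHermitian_diagonal_of_self_adjoint _ <| funext fun i => by
    by_cases hi : i ∈ S <;> simp [hi]

theorem coordProj_mul_self [Fintype n] [NonAssocSemiring R] (S : Finset n) :
    (coordProj S : Matrix n n R) * coordProj S = coordProj S := by
  rw [coordProj, diagonal_mul_diagonal]
  congr 1
  funext i
  by_cases hi : i ∈ S <;> simp [hi]

theorem rank_coordProj [Fintype n] [Field R] [DecidableEq R] (S : Finset n) :
    (coordProj S : Matrix n n R).rank = S.card := by
  rw [coordProj, rank_diagonal, ← Fintype.card_coe S]
  exact Fintype.card_congr <| Equiv.subtypeEquivRight fun i => by simp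

theorem coordProj_mul_mul_coordProj_eq_zero [Fintype n] [NonAssocSemiring R] {S : Finset n}
    {T : Matrix n n R} (hT : ∀ i ∈ S, ∀ j ∈ S, T i j = 0) :
    coordProj S * T * coordProj S = 0 := by
  ext i j
  rw [coordProj, mul_diagonal, diagonal_mul]
  by_cases hi : i ∈ S <;> by_cases hj : j ∈ S <;> simp [hi, hj, hT]

end Matrix

theorem zero_mem_rankKRange_card_of_block_eq_zero {n : Type*} [Fintype n] [DecidableEq n]
    {T : Matrix n n ℂ} (S : Finset n) (hT : ∀ i ∈ S, ∀ j ∈ S, T i j = 0) :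
    (0 : ℂ) ∈ rankKRange S.card T := by
  refine ⟨coordProj S, isHermitian_coordProj S, coordProj_mul_self S, rank_coordProj S, ?_⟩
  rw [zero_smul]
  exact coordProj_mul_mul_coordProj_eq_zero hT

/-- 0 belongs to the rank-2 numerical range of the cyclic 5-shift. -/
theorem zero_mem_rankKRange_two_cyclicShift (U : Matrix (Fin 5) (Fin 5) ℂ)
    (hU : ∀ j : Fin 5, U *ᵥ (Pi.single j 1) = Pi.single (j + 1) 1) :
    (0 : ℂ) ∈ rankKRange 2 U := by
  have hU_apply (i j : Fin 5) : U i j = (Pi.single (j + 1) 1 : Fin 5 → ℂ) i := by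
    simpa [mulVec_single_one] using congrFun (hU j) i
  refine zero_mem_rankKRange_card_of_block_eq_zero {0, 2} fun i hi j hj => ?_
  rw [hU_apply, Pi.single_apply, if_neg]
  fin_cases i <;> fin_cases j <;> simp_all
end
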